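/- arXiv:2210.14708 — 2 statements merged into one kernel-verified Lean document; each statement's English description precedes it below -/
import Mathlib

section
/- For a finite group G, the enhanced power graph P_e(G) equals the order super enhanced power graph P_e^o(G) if and only if G is cyclic. -/
/-- The power graph of a group `G`: distinct `x, y` are adjacent iff one is a power
of the other, i.e. `x ∈ ⟨y⟩` or `y ∈ ⟨x⟩`. -/
def powerGraph (G : Type*) [Group G] : SimpleGraph G :=
  SimpleGraph.fromRel (fun x y => x ∈ Subgroup.zpowers y)

/-- The enhanced power graph of a group `G`: distinct `x, y` are adjacent iff they lie
in a common cyclic subgroup. -/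
def enhancedPowerGraph (G : Type*) [Group G] : SimpleGraph G :=
  SimpleGraph.fromRel
    (fun x y => ∃ z : G, x ∈ Subgroup.zpowers z ∧ y ∈ Subgroup.zpowers z)

/-- The commuting graph of a group `G`: distinct `x, y` are adjacent iff they commute. -/
def commutingGraph (G : Type*) [Group G] : SimpleGraph G :=
  SimpleGraph.fromRel (fun x y => x * y = y * x)

/-- The order super graph of a graph `A` on a group `G`: distinct `x, y` are adjacent iff
they have the same order, or some elements of the same orders are adjacent in `A`. -/
def orderSuper (G : Type*) [Group G] (A : SimpleGraph G) : SimpleGraph G :=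
  SimpleGraph.fromRel (fun x y =>
    orderOf x = orderOf y ∨
      ∃ x' y' : G, orderOf x' = orderOf x ∧ orderOf y' = orderOf y ∧ A.Adj x' y')

/-- The conjugacy super graph of a graph `A` on a group `G`: distinct `x, y` are adjacent
iff they are conjugate, or some conjugates of them are adjacent in `A`. -/
def conjSuper (G : Type*) [Group G] (A : SimpleGraph G) : SimpleGraph G :=
  SimpleGraph.fromRel (fun x y =>
    IsConj x y ∨ ∃ x' y' : G, IsConj x x' ∧ IsConj y y' ∧ A.Adj x' y')

/-- A vertex of a simple graph is dominant if it is adjacent to every other vertex. -/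
def IsDominantVertex {V : Type*} (Γ : SimpleGraph V) (v : V) : Prop :=
  ∀ w, w ≠ v → Γ.Adj v w

/-! The order super graph joins any two elements of equal order, so equality forces any two
elements of equal order to lie in a common cyclic subgroup, where they generate the same subgroup. Then the elements of order `d`
all lie in one cyclic subgroup of order `d`, so there are at most `φ d` of them, and summing
over the divisors of `n` leaves at most `n` solutions of `x ^ n = 1`: the group is cyclic.
Conversely, in a cyclic group both graphs are complete. -/

open Subgroup Finset Nat

section Group

variable {G : Type*} [Group G]

theorem pow_mem_zpowers_pow_of_gcd_dvd {z : G} {m k : ℕ} (h : (orderOf z).gcd m ∣ k) :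
    z ^ k ∈ zpowers (z ^ m) := by
  obtain ⟨c, rfl⟩ := h
  rw [pow_mul]
  refine pow_mem (mem_zpowers_iff.2 ⟨gcdB (orderOf z) m, ?_⟩) c
  -- Bézout: `z ^ gcd N m = (z ^ N) ^ A * (z ^ m) ^ B`, where `N = orderOf z`.
  rw [← zpow_natCast z ((orderOf z).gcd m), Nat.gcd_eq_gcd_ab, zpow_add, zpow_mul, zpow_natCast,
    pow_orderOf_eq_one, one_zpow, one_mul, zpow_mul, zpow_natCast]

theorem mem_zpowers_of_orderOf_eq {z a b : G} (hz : IsOfFinOrder z) (ha : a ∈ zpowers z)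
    (hb : b ∈ zpowers z) (hab : orderOf a = orderOf b) : b ∈ zpowers a := by
  obtain ⟨m, rfl⟩ := hz.mem_powers_iff_mem_zpowers.2 ha
  obtain ⟨k, rfl⟩ := hz.mem_powers_iff_mem_zpowers.2 hb
  rw [hz.orderOf_pow, hz.orderOf_pow] at hab
  have hN : orderOf z ≠ 0 := hz.orderOf_pos.ne'
  refine pow_mem_zpowers_pow_of_gcd_dvd ?_
  calc (orderOf z).gcd m
      = orderOf z / (orderOf z / (orderOf z).gcd m) :=
        (Nat.div_div_self (Nat.gcd_dvd_left _ _) hN).symm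
    _ = (orderOf z).gcd k := by rw [hab, Nat.div_div_self (Nat.gcd_dvd_left _ _) hN]
    _ ∣ k := Nat.gcd_dvd_right _ _

theorem card_orderOf_eq_le_totient [Fintype G] {a : G}
    (ha : ∀ b : G, orderOf b = orderOf a → b ∈ zpowers a) :
    #{b : G | orderOf b = orderOf a} ≤ φ (orderOf a) :=
  calc #{b : G | orderOf b = orderOf a}
      ≤ #{b : zpowers a | orderOf b = orderOf a} :=
        card_le_card_of_surjOn Subtype.val fun b hb ↦ by
          have hb : orderOf b = orderOf a := (mem_filter.1 hb).2
          exact ⟨⟨b, ha b hb⟩, by simpa [orderOf_mk] using hb, rfl⟩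
    _ = φ (orderOf a) := IsCyclic.card_orderOf_eq_totient (by rw [Fintype.card_zpowers])

theorem isCyclic_of_forall_orderOf_eq_mem_zpowers [Fintype G]
    (h : ∀ a b : G, orderOf a = orderOf b → b ∈ zpowers a) : IsCyclic G := by
  classical
  refine isCyclic_of_card_pow_eq_one_le fun n hn ↦ ?_
  have card_le_totient (d : ℕ) : #{b : G | orderOf b = d} ≤ φ d := by
    obtain hd | ⟨a, ha⟩ := eq_empty_or_nonempty ({b : G | orderOf b = d} : Finset G)
    · simp [hd]
    obtain rfl : orderOf a = d := (mem_filter.1 ha).2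
    exact card_orderOf_eq_le_totient fun b hb ↦ h a b hb.symm
  calc #{b : G | b ^ n = 1}
      = ∑ d ∈ n.divisors, #{b : G | orderOf b = d} :=
        (sum_card_orderOf_eq_card_pow_eq_one hn.ne').symm
    _ ≤ ∑ d ∈ n.divisors, φ d := sum_le_sum fun d _ ↦ card_le_totient d
    _ = n := sum_totient n

variable {x y : G}

theorem enhancedPowerGraph_adj_iff :
    (enhancedPowerGraph G).Adj x y ↔ x ≠ y ∧ ∃ z : G, x ∈ zpowers z ∧ y ∈ zpowers z := by
  simp only [enhancedPowerGraph, SimpleGraph.fromRel_adj, ne_eq, and_congr_right_iff]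
  exact fun _ ↦ or_iff_left_of_imp fun ⟨z, hy, hx⟩ ↦ ⟨z, hx, hy⟩

theorem enhancedPowerGraph_eq_top [IsCyclic G] : enhancedPowerGraph G = ⊤ := by
  obtain ⟨g, hg⟩ := IsCyclic.exists_generator (α := G)
  ext x y
  exact enhancedPowerGraph_adj_iff.trans ⟨And.left, fun hne ↦ ⟨hne, g, hg x, hg y⟩⟩

theorem orderSuper_adj_of_orderOf_eq {A : SimpleGraph G} (hne : x ≠ y)
    (h : orderOf x = orderOf y) : (orderSuper G A).Adj x y :=
  (SimpleGraph.fromRel_adj _ _ _).2 ⟨hne, Or.inl (Or.inl h)⟩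

theorem orderSuper_top : orderSuper G ⊤ = ⊤ := by
  ext x y
  refine ⟨SimpleGraph.Adj.ne, fun hne ↦ (SimpleGraph.fromRel_adj _ _ _).2 ?_⟩
  exact ⟨hne, Or.inl (Or.inr ⟨x, y, rfl, rfl, hne⟩)⟩

end Group

/-- For a finite group `G`, the enhanced power graph equals the order super enhanced
power graph iff `G` is cyclic. -/
theorem enhancedPowerGraph_eq_orderSuper_iff_isCyclic (G : Type*) [Group G] [Fintype G] :
    enhancedPowerGraph G = orderSuper G (enhancedPowerGraph G) ↔ IsCyclic G := by
  constructor
  · intro h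
    refine isCyclic_of_forall_orderOf_eq_mem_zpowers fun a b hab ↦ ?_
    obtain rfl | hne := eq_or_ne a b
    · exact mem_zpowers a
    have hadj : (enhancedPowerGraph G).Adj a b := h ▸ orderSuper_adj_of_orderOf_eq hne hab
    obtain ⟨-, z, ha, hb⟩ := enhancedPowerGraph_adj_iff.1 hadj
    exact mem_zpowers_of_orderOf_eq (isOfFinOrder_of_finite z) ha hb hab
  · intro _
    rw [enhancedPowerGraph_eq_top, orderSuper_top]
end

section
/- For a finite group G, the order super power graph P^o(G) equals the order super commuting graph Δ^o(G) if and only if every element of G has prime power order (i.e., for every x ∈ G, o(x) = p^k for some prime p and integer k ≥ 0). -/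
/-!
Power-graph edges imply commuting-graph edges, so `P^o(G) ≤ Δ^o(G)` always. In a finite group
`P^o(G)` joins distinct `x, y` exactly when one of `o(x), o(y)` divides the other, since `⟨y⟩`
contains an element of every order dividing `o(y)`. Hence equality means: commuting elements
have orders comparable under divisibility. If `o(x)` had two prime divisors `p ≠ q`, the
elements of orders `p` and `q` in `⟨x⟩` would violate this. Conversely, if all orders are prime
powers, commuting elements of coprime orders `p^i, q^j` give `o(xy) = p^i q^j`; as this is a
prime power too, its divisors `p^i` and `q^j` are comparable after all.
-/

open SimpleGraph

namespace Nat

lemma dvd_or_dvd_of_dvd_prime_pow {p m a b : ℕ} (hp : p.Prime) (ha : a ∣ p ^ m)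
    (hb : b ∣ p ^ m) : a ∣ b ∨ b ∣ a := by
  obtain ⟨i, -, rfl⟩ := (dvd_prime_pow hp).1 ha
  obtain ⟨j, -, rfl⟩ := (dvd_prime_pow hp).1 hb
  exact (le_total i j).imp (pow_dvd_pow p) (pow_dvd_pow p)

lemma coprime_or_dvd_or_dvd_of_prime_pow {p q : ℕ} (hp : p.Prime) (hq : q.Prime) (i j : ℕ) :
    (p ^ i).Coprime (q ^ j) ∨ p ^ i ∣ q ^ j ∨ q ^ j ∣ p ^ i := by
  rcases eq_or_ne p q with rfl | hpq
  · exact Or.inr (dvd_or_dvd_of_dvd_prime_pow hp (pow_dvd_pow p (le_add_right i j))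
      (pow_dvd_pow p (le_add_left j i)))
  · exact Or.inl (coprime_pow_primes i j hp hq hpq)

lemma exists_prime_pow_eq_of_prime_dvd_eq {n : ℕ} (hn : n ≠ 0)
    (h : ∀ p q, p.Prime → q.Prime → p ∣ n → q ∣ n → p = q) :
    ∃ p k, p.Prime ∧ n = p ^ k := by
  rcases eq_or_ne n 1 with rfl | hn1
  · exact ⟨2, 0, prime_two, rfl⟩
  · exact ⟨n.minFac, _, minFac_prime hn1, eq_prime_pow_of_unique_prime_dvd hn
      fun hd hdn => h _ _ hd (minFac_prime hn1) hdn (minFac_dvd n)⟩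

end Nat

section OrderSuper

variable {G : Type*} [Group G]

lemma orderSuper_adj {A : SimpleGraph G} {x y : G} :
    (orderSuper G A).Adj x y ↔ x ≠ y ∧ (orderOf x = orderOf y ∨
      ∃ x' y', orderOf x' = orderOf x ∧ orderOf y' = orderOf y ∧ A.Adj x' y') := by
  refine (fromRel_adj _ x y).trans (and_congr_right fun _ => or_iff_left_of_imp ?_)
  exact Or.imp Eq.symm fun ⟨y', x', hy, hx, hA⟩ => ⟨x', y', hx, hy, hA.symm⟩

lemma commutingGraph_adj {x y : G} : (commutingGraph G).Adj x y ↔ x ≠ y ∧ Commute x y :=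
  (fromRel_adj _ x y).trans (and_congr_right fun _ => or_iff_left_of_imp Eq.symm)

lemma orderSuper_mono {A B : SimpleGraph G} (h : A ≤ B) : orderSuper G A ≤ orderSuper G B :=
  fun _ _ hadj => orderSuper_adj.2 <| (orderSuper_adj.1 hadj).imp_right <|
    Or.imp_right fun ⟨x', y', hx, hy, hA⟩ => ⟨x', y', hx, hy, h hA⟩

lemma commute_of_mem_zpowers {x y : G} (h : x ∈ Subgroup.zpowers y) : Commute x y := by
  obtain ⟨k, rfl⟩ := Subgroup.mem_zpowers_iff.1 h
  exact (Commute.refl y).zpow_left k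

lemma powerGraph_le_commutingGraph : powerGraph G ≤ commutingGraph G := fun x y hadj =>
  commutingGraph_adj.2 ⟨hadj.ne, ((fromRel_adj _ x y).1 hadj).2.elim commute_of_mem_zpowers
    fun h => (commute_of_mem_zpowers h).symm⟩

lemma SimpleGraph.Adj.orderOf_dvd_or_dvd_of_powerGraph {x y : G}
    (h : (powerGraph G).Adj x y) : orderOf x ∣ orderOf y ∨ orderOf y ∣ orderOf x :=
  ((fromRel_adj _ x y).1 h).2.imp orderOf_dvd_of_mem_zpowers orderOf_dvd_of_mem_zpowers

lemma exists_powerGraph_adj_of_orderOf_dvd [Finite G] {x y : G}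
    (hne : orderOf x ≠ orderOf y) (hdvd : orderOf x ∣ orderOf y) :
    ∃ x', orderOf x' = orderOf x ∧ (powerGraph G).Adj x' y := by
  have hord := orderOf_pow_orderOf_div (orderOf_pos y).ne' hdvd
  refine ⟨_, hord, (fromRel_adj _ _ _).2 ⟨?_, Or.inl (Subgroup.npow_mem_zpowers _ _)⟩⟩
  exact fun h => hne (hord ▸ congrArg orderOf h)

lemma orderSuper_powerGraph_adj [Finite G] {x y : G} :
    (orderSuper G (powerGraph G)).Adj x y ↔
      x ≠ y ∧ (orderOf x ∣ orderOf y ∨ orderOf y ∣ orderOf x) := by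
  rw [orderSuper_adj]
  refine and_congr_right fun _ => ⟨?_, fun hdvd => ?_⟩
  · rintro (heq | ⟨x', y', hx, hy, hA⟩)
    · exact Or.inl heq.dvd
    · exact hx ▸ hy ▸ hA.orderOf_dvd_or_dvd_of_powerGraph
  rcases eq_or_ne (orderOf x) (orderOf y) with heq | hne
  · exact Or.inl heq
  refine Or.inr (hdvd.elim (fun h => ?_) fun h => ?_)
  · obtain ⟨x', hx', hA⟩ := exists_powerGraph_adj_of_orderOf_dvd hne h
    exact ⟨x', y, hx', rfl, hA⟩
  · obtain ⟨y', hy', hA⟩ := exists_powerGraph_adj_of_orderOf_dvd hne.symm h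
    exact ⟨x, y', rfl, hy', hA.symm⟩

lemma orderSuper_commutingGraph_le_orderSuper_powerGraph_iff [Finite G] :
    orderSuper G (commutingGraph G) ≤ orderSuper G (powerGraph G) ↔
      ∀ x y : G, Commute x y → orderOf x ∣ orderOf y ∨ orderOf y ∣ orderOf x := by
  refine ⟨fun hle x y hxy => ?_, fun h x y hadj => ?_⟩
  · rcases eq_or_ne x y with rfl | hne
    · exact Or.inl dvd_rfl
    have hadj : (orderSuper G (commutingGraph G)).Adj x y :=
      orderSuper_adj.2 ⟨hne, Or.inr ⟨x, y, rfl, rfl, commutingGraph_adj.2 ⟨hne, hxy⟩⟩⟩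
    exact (orderSuper_powerGraph_adj.1 (hle hadj)).2
  obtain ⟨hne, heq | ⟨x', y', hx, hy, hA⟩⟩ := orderSuper_adj.1 hadj
  · exact orderSuper_powerGraph_adj.2 ⟨hne, Or.inl heq.dvd⟩
  · exact orderSuper_powerGraph_adj.2 ⟨hne, hx ▸ hy ▸ h x' y' (commutingGraph_adj.1 hA).2⟩

lemma Commute.orderOf_dvd_or_dvd_of_forall_prime_pow
    (hG : ∀ g : G, ∃ p k, p.Prime ∧ orderOf g = p ^ k) {x y : G} (h : Commute x y) :
    orderOf x ∣ orderOf y ∨ orderOf y ∣ orderOf x := by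
  obtain ⟨p, i, hp, hx⟩ := hG x
  obtain ⟨q, j, hq, hy⟩ := hG y
  rw [hx, hy]
  rcases Nat.coprime_or_dvd_or_dvd_of_prime_pow hp hq i j with hco | hdvd
  · obtain ⟨r, m, hr, hxy⟩ := hG (x * y)
    rw [h.orderOf_mul_eq_mul_orderOf_of_coprime (hx ▸ hy ▸ hco), hx, hy] at hxy
    exact Nat.dvd_or_dvd_of_dvd_prime_pow hr (hxy ▸ dvd_mul_right _ _) (hxy ▸ dvd_mul_left _ _)
  · exact hdvd

lemma exists_prime_pow_eq_orderOf_of_forall_commute [Finite G]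
    (h : ∀ x y : G, Commute x y → orderOf x ∣ orderOf y ∨ orderOf y ∣ orderOf x) (x : G) :
    ∃ p k, p.Prime ∧ orderOf x = p ^ k := by
  have hx := (orderOf_pos x).ne'
  refine Nat.exists_prime_pow_eq_of_prime_dvd_eq hx fun p q hp hq hpx hqx => ?_
  have hpq := h _ _ ((Commute.refl x).pow_pow (orderOf x / p) (orderOf x / q))
  rw [orderOf_pow_orderOf_div hx hpx, orderOf_pow_orderOf_div hx hqx] at hpq
  exact hpq.elim (Nat.prime_dvd_prime_iff_eq hp hq).1
    fun hqp => ((Nat.prime_dvd_prime_iff_eq hq hp).1 hqp).symm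

lemma forall_commute_orderOf_dvd_or_dvd_iff [Finite G] :
    (∀ x y : G, Commute x y → orderOf x ∣ orderOf y ∨ orderOf y ∣ orderOf x) ↔
      ∀ x : G, ∃ p k, p.Prime ∧ orderOf x = p ^ k :=
  ⟨exists_prime_pow_eq_orderOf_of_forall_commute, fun hG _ _ =>
    Commute.orderOf_dvd_or_dvd_of_forall_prime_pow hG⟩

end OrderSuper

/-- For a finite group `G`, the order super power graph equals the order super commuting
graph iff every element of `G` has prime power order. -/
theorem orderSuper_powerGraph_eq_orderSuper_commutingGraph_iff
    (G : Type*) [Group G] [Fintype G] :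
    orderSuper G (powerGraph G) = orderSuper G (commutingGraph G) ↔
      ∀ x : G, ∃ (p k : ℕ), p.Prime ∧ orderOf x = p ^ k := by
  rw [le_antisymm_iff, and_iff_right (orderSuper_mono powerGraph_le_commutingGraph),
    orderSuper_commutingGraph_le_orderSuper_powerGraph_iff, forall_commute_orderOf_dvd_or_dvd_iff]
end
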